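/- (Stability of the interval observer, discrete time.) Let A ∈ ℝ^{n×n}, C ∈ ℝ^{l×n}, let φ : ℝⁿ → ℝⁿ and ψ : ℝⁿ → ℝˡ have decomposition functions φ_d and ψ_d, and suppose there are entrywise nonnegative matrices F̄_φ ∈ ℝ^{n×n} and F̄_ψ ∈ ℝ^{l×n} such that for all x̲ ≤ x̄: φ_d(x̄,x̲) − φ_d(x̲,x̄) ≤ F̄_φ (x̄ − x̲) and ψ_d(x̄,x̲) − ψ_d(x̲,x̄) ≤ F̄_ψ (x̄ − x̲). Suppose there exist a symmetric positive definite P ∈ ℝ^{n×n}, X ∈ ℝ^{n×n} and J ∈ ℝ^{l×n} with J ≤ 0 entrywise, such that: the symmetric 2n×2n block matrix [[−P, Γ],[Γᵀ, P − X − Xᵀ]] is negative definite, where Γ := (|A|ᵀ + F̄_φᵀ) X − (|C|ᵀ + F̄_ψᵀ) J; Jᵀ C ≤ 0 entrywise; and −X is Metzler. Then X is invertible; set L := −(Xᵀ)⁻¹ Jᵀ. For every plant trajectory x_{t+1} = A x_t + φ(x_t), y_t = C x_t + ψ(x_t) and observer trajectories x̄_{t+1} = (A−LC)⁺ x̄_t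 − (A−LC)⁻ x̲_t + L y_t + φ_d(x̄_t, x̲_t) − L⁺ ψ_d(x̲_t, x̄_t) + L⁻ ψ_d(x̄_t, x̲_t), x̲_{t+1} = (A−LC)⁺ x̲_t − (A−LC)⁻ x̄_t + L y_t + φ_d(x̲_t, x̄_t) − L⁺ ψ_d(x̄_t, x̲_t) + L⁻ ψ_d(x̲_t, x̄_t) with x̲₀ ≤ x₀ ≤ x̄₀, the framer error ε_t := x̄_t − x̲_t converges to 0 as t → ∞. -/

import Mathlib

/-!
Testing the LMI at `(0, w)` gives `wᵀPw < 2 wᵀXw`, so `X` has positive definite symmetric part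
and is invertible; since `-X` is Metzler, `X` is a nonsingular M-matrix, so `X⁻¹ ≥ 0`, the gain
`L = -(Xᵀ)⁻¹Jᵀ` is nonnegative and `J = -LᵀX`. Hence `Γ = MᵀX` with
`M = |A| + F̄_φ + L (|C| + F̄_ψ) ≥ 0`, and the LMI at `(v, Mv)` becomes `(Mv)ᵀP(Mv) < vᵀPv`:
`P` is a Lyapunov matrix for `M`, so `Mᵗ → 0`. The observer step is itself a decomposition
function of the plant step, which keeps `x̲ₜ ≤ xₜ ≤ x̄ₜ`, and the framer error then satisfies
`0 ≤ εₜ₊₁ ≤ M εₜ`, so `0 ≤ εₜ ≤ Mᵗ ε₀ → 0`.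
-/

open Matrix

/-- Entrywise positive part `M⁺ = max(M,0)`. -/
noncomputable def entPos {p n : ℕ} (M : Matrix (Fin p) (Fin n) ℝ) : Matrix (Fin p) (Fin n) ℝ :=
  Matrix.of fun i j => max (M i j) 0

/-- Entrywise negative part `M⁻ = M⁺ - M`. -/
noncomputable def entNeg {p n : ℕ} (M : Matrix (Fin p) (Fin n) ℝ) : Matrix (Fin p) (Fin n) ℝ :=
  entPos M - M

/-- Entrywise absolute value `|M| = M⁺ + M⁻`. -/
noncomputable def entAbs {p n : ℕ} (M : Matrix (Fin p) (Fin n) ℝ) : Matrix (Fin p) (Fin n) ℝ :=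
  entPos M + entNeg M

/-- `M^d`: the diagonal matrix with the same diagonal as `M`. -/
def diagPart {n : ℕ} (M : Matrix (Fin n) (Fin n) ℝ) : Matrix (Fin n) (Fin n) ℝ :=
  Matrix.diagonal fun i => M i i

/-- `M^{nd} = M - M^d`. -/
def offDiagPart {n : ℕ} (M : Matrix (Fin n) (Fin n) ℝ) : Matrix (Fin n) (Fin n) ℝ := M - diagPart M

/-- `M^m = M^d + |M^{nd}|`. -/
noncomputable def metzPart {n : ℕ} (M : Matrix (Fin n) (Fin n) ℝ) : Matrix (Fin n) (Fin n) ℝ :=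
  diagPart M + entAbs (offDiagPart M)

/-- A square real matrix is Metzler if all off-diagonal entries are nonnegative. -/
def Metzler {n : ℕ} (M : Matrix (Fin n) (Fin n) ℝ) : Prop := ∀ i j, i ≠ j → 0 ≤ M i j

/-- `gd` is a (discrete-time mixed-monotone) decomposition function of `g`. -/
def IsDecompositionFunction {n p : ℕ} (g : (Fin n → ℝ) → Fin p → ℝ)
    (gd : (Fin n → ℝ) → (Fin n → ℝ) → Fin p → ℝ) : Prop :=
  (∀ x, gd x x = g x) ∧
  (∀ x x' x₂, x ≤ x' → gd x x₂ ≤ gd x' x₂) ∧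
  (∀ x x' x₁, x ≤ x' → gd x₁ x' ≤ gd x₁ x)

open Filter Topology

theorem exists_pos_mul_norm_sq_le {E : Type*} [NormedAddCommGroup E] [NormedSpace ℝ E]
    [FiniteDimensional ℝ E] {g : E → ℝ} (hg : Continuous g)
    (hhom : ∀ (c : ℝ) v, g (c • v) = c ^ 2 * g v) (hpos : ∀ v, v ≠ 0 → 0 < g v) :
    ∃ ε > 0, ∀ v, ε * ‖v‖ ^ 2 ≤ g v := by
  have hg0 : g 0 = 0 := by simpa using hhom 0 0
  rcases subsingleton_or_nontrivial E with hE | hE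
  · exact ⟨1, one_pos, fun v => by simp [Subsingleton.elim v 0, hg0]⟩
  obtain ⟨u, hu, hmin⟩ := (isCompact_sphere (0 : E) 1).exists_isMinOn
    (NormedSpace.sphere_nonempty.2 zero_le_one) hg.continuousOn
  refine ⟨g u, hpos u (ne_zero_of_mem_unit_sphere ⟨u, hu⟩), fun v => ?_⟩
  rcases eq_or_ne v 0 with rfl | hv
  · simp [hg0]
  have hnorm : ‖v‖ ≠ 0 := norm_ne_zero_iff.2 hv
  have hsphere : ‖v‖⁻¹ • v ∈ Metric.sphere (0 : E) 1 := by
    simp [norm_smul, hnorm]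
  calc g u * ‖v‖ ^ 2 ≤ g (‖v‖⁻¹ • v) * ‖v‖ ^ 2 :=
        mul_le_mul_of_nonneg_right (hmin hsphere) (sq_nonneg _)
    _ = g v := by rw [hhom]; field_simp

theorem tendsto_pow_mulVec_zero_of_lyapunov {ι : Type*} [Fintype ι] [DecidableEq ι]
    {P M : Matrix ι ι ℝ} (hP : P.PosSemidef)
    (hdec : ∀ v, v ≠ 0 → (M *ᵥ v) ⬝ᵥ P *ᵥ (M *ᵥ v) < v ⬝ᵥ P *ᵥ v)
    (w : ι → ℝ) : Tendsto (fun t : ℕ => (M ^ t) *ᵥ w) atTop (𝓝 0) := by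
  set q : (ι → ℝ) → ℝ := fun v => v ⬝ᵥ P *ᵥ v with hq
  have hq0 : ∀ v, 0 ≤ q v := fun v => by simpa using hP.dotProduct_mulVec_nonneg v
  have hhom : ∀ (c : ℝ) v, q (M *ᵥ (c • v)) = c ^ 2 * q (M *ᵥ v) ∧ q (c • v) = c ^ 2 * q v := by
    intro c v
    simp only [hq, mulVec_smul, dotProduct_smul, smul_dotProduct, smul_eq_mul]
    constructor <;> ring
  obtain ⟨ε, hε, hεq⟩ := exists_pos_mul_norm_sq_le (g := fun v => q v - q (M *ᵥ v))
    (by fun_prop) (fun c v => by simp only [(hhom c v).1, (hhom c v).2]; ring)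
    (fun v hv => sub_pos.2 (hdec v hv))
  have htelescope : ∀ T, ∑ t ∈ Finset.range T, ε * ‖(M ^ t) *ᵥ w‖ ^ 2 ≤
      q w - q ((M ^ T) *ᵥ w) := by
    intro T
    induction T with
    | zero => simp
    | succ T ih =>
      have := hεq ((M ^ T) *ᵥ w)
      rw [Finset.sum_range_succ, pow_succ' M T, ← mulVec_mulVec]
      linarith
  have hsummable : Summable fun t => ε * ‖(M ^ t) *ᵥ w‖ ^ 2 :=
    summable_of_sum_range_le (fun t => by positivity)
      (fun T => (htelescope T).trans (sub_le_self _ (hq0 _)))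
  have hsq : Tendsto (fun t => ‖(M ^ t) *ᵥ w‖ ^ 2) atTop (𝓝 0) := by
    simpa [hε.ne'] using hsummable.tendsto_atTop_zero.const_mul ε⁻¹
  rw [tendsto_zero_iff_norm_tendsto_zero]
  simpa using hsq.sqrt

theorem isUnit_det_of_dotProduct_mulVec_pos {ι : Type*} [Fintype ι] [DecidableEq ι]
    {X : Matrix ι ι ℝ} (hpos : ∀ v, v ≠ 0 → 0 < v ⬝ᵥ X *ᵥ v) : IsUnit X.det := by
  rw [isUnit_iff_ne_zero]
  intro hdet
  obtain ⟨v, hv, hXv⟩ := exists_mulVec_eq_zero_iff.2 hdet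
  simpa [hXv] using hpos v hv

section MMatrix

variable {n : ℕ} {X : Matrix (Fin n) (Fin n) ℝ}

/-- Testing `X` against the negative part `u⁻` of `u`: off the diagonal `X` is nonpositive and
`u⁻ᵢ u⁺ᵢ = 0`, so `u⁻ ⬝ X u⁻ = u⁻ ⬝ X u⁺ - u⁻ ⬝ X u ≤ 0`, forcing `u⁻ = 0`. -/
theorem nonneg_of_mulVec_nonneg_of_metzler_neg (hX : Metzler (-X))
    (hpos : ∀ v, v ≠ 0 → 0 < v ⬝ᵥ X *ᵥ v) {u : Fin n → ℝ} (hu : 0 ≤ X *ᵥ u) : 0 ≤ u := by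
  have hcross : u⁻ ⬝ᵥ X *ᵥ u⁺ ≤ 0 := by
    refine Finset.sum_nonpos fun i _ => ?_
    simp only [mulVec, dotProduct, Finset.mul_sum]
    refine Finset.sum_nonpos fun j _ => ?_
    simp only [Pi.negPart_apply, Pi.posPart_apply]
    rcases eq_or_ne i j with rfl | hij
    · rcases le_total (u i) 0 with h | h
      · simp [posPart_eq_zero.2 h]
      · simp [negPart_eq_zero.2 h]
    · have : X i j ≤ 0 := neg_nonneg.1 (hX i j hij)
      exact mul_nonpos_of_nonneg_of_nonpos (negPart_nonneg _)
        (mul_nonpos_of_nonpos_of_nonneg this (posPart_nonneg _))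
  have hneg : u⁻ ⬝ᵥ X *ᵥ u⁻ ≤ 0 := by
    have hsplit : u⁻ = u⁺ - u :=
      (sub_sub_cancel u⁺ u⁻).symm.trans (by rw [posPart_sub_negPart])
    have := dotProduct_nonneg_of_nonneg (negPart_nonneg u) hu
    calc u⁻ ⬝ᵥ X *ᵥ u⁻ = u⁻ ⬝ᵥ X *ᵥ u⁺ - u⁻ ⬝ᵥ X *ᵥ u := by
          conv_lhs => rw [hsplit]
          rw [mulVec_sub, dotProduct_sub, ← hsplit]
      _ ≤ 0 := by linarith
  by_contra h
  exact (hpos _ (mt negPart_eq_zero.1 h)).not_ge hneg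

theorem inv_nonneg_of_metzler_neg (hX : Metzler (-X)) (hpos : ∀ v, v ≠ 0 → 0 < v ⬝ᵥ X *ᵥ v)
    (i j : Fin n) : 0 ≤ X⁻¹ i j := by
  have hcol : X *ᵥ (X⁻¹ *ᵥ Pi.single j 1) = Pi.single j 1 := by
    rw [mulVec_mulVec, mul_nonsing_inv _ (isUnit_det_of_dotProduct_mulVec_pos hpos), one_mulVec]
  have := nonneg_of_mulVec_nonneg_of_metzler_neg hX hpos (u := X⁻¹ *ᵥ Pi.single j 1)
    (by rw [hcol]; exact Pi.single_nonneg.2 zero_le_one) i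
  rwa [mulVec_single_one] at this

end MMatrix

section LMI

variable {ι : Type*} [Fintype ι] {P X Γ : Matrix ι ι ℝ}

theorem sumElim_dotProduct_fromBlocks_mulVec {m R : Type*} [Fintype m] [CommSemiring R]
    (A : Matrix ι ι R) (B : Matrix ι m R) (C : Matrix m ι R) (D : Matrix m m R) (v : ι → R)
    (w : m → R) : Sum.elim v w ⬝ᵥ fromBlocks A B C D *ᵥ Sum.elim v w =
      v ⬝ᵥ A *ᵥ v + v ⬝ᵥ B *ᵥ w + (w ⬝ᵥ C *ᵥ v + w ⬝ᵥ D *ᵥ w) := by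
  simp only [fromBlocks_mulVec, sumElim_dotProduct_sumElim, dotProduct_add, Sum.elim_comp_inl,
    Sum.elim_comp_inr]

theorem dotProduct_lt_of_negDef_fromBlocks
    (hLMI : (-(fromBlocks (-P) Γ Γᵀ (P - X - Xᵀ))).PosDef) {v w : ι → ℝ}
    (hvw : Sum.elim v w ≠ 0) :
    2 * (v ⬝ᵥ Γ *ᵥ w) + w ⬝ᵥ P *ᵥ w < v ⬝ᵥ P *ᵥ v + 2 * (w ⬝ᵥ X *ᵥ w) := by
  have h := hLMI.dotProduct_mulVec_pos hvw
  simp only [star_trivial, neg_mulVec, dotProduct_neg, sumElim_dotProduct_fromBlocks_mulVec,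
    sub_mulVec, dotProduct_sub, dotProduct_transpose_mulVec] at h
  linarith

theorem dotProduct_mulVec_pos_of_negDef_fromBlocks (hP : P.PosSemidef)
    (hLMI : (-(fromBlocks (-P) Γ Γᵀ (P - X - Xᵀ))).PosDef) {w : ι → ℝ} (hw : w ≠ 0) :
    0 < w ⬝ᵥ X *ᵥ w := by
  have h := dotProduct_lt_of_negDef_fromBlocks hLMI (v := 0) (w := w)
    (fun h => hw (funext fun i => congrFun h (Sum.inr i)))
  have := hP.dotProduct_mulVec_nonneg w
  simp only [star_trivial, zero_dotProduct, mulVec_zero, dotProduct_zero] at h this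
  linarith

theorem lyapunov_decrease_of_negDef_fromBlocks {M : Matrix ι ι ℝ} (hΓ : Γ = Mᵀ * X)
    (hLMI : (-(fromBlocks (-P) Γ Γᵀ (P - X - Xᵀ))).PosDef) {v : ι → ℝ} (hv : v ≠ 0) :
    (M *ᵥ v) ⬝ᵥ P *ᵥ (M *ᵥ v) < v ⬝ᵥ P *ᵥ v := by
  have h := dotProduct_lt_of_negDef_fromBlocks hLMI (v := v) (w := M *ᵥ v)
    (fun h => hv (funext fun i => congrFun h (Sum.inl i)))
  rw [hΓ, ← mulVec_mulVec, dotProduct_transpose_mulVec, dotProduct_comm (X *ᵥ (M *ᵥ v))] at h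
  linarith

end LMI

section EntrywiseParts

variable {p n : ℕ}

theorem entPos_nonneg (M : Matrix (Fin p) (Fin n) ℝ) (i : Fin p) (j : Fin n) :
    0 ≤ entPos M i j :=
  le_max_right _ _

theorem entNeg_nonneg (M : Matrix (Fin p) (Fin n) ℝ) (i : Fin p) (j : Fin n) :
    0 ≤ entNeg M i j :=
  sub_nonneg.2 (le_max_left _ _)

theorem entPos_sub_entNeg (M : Matrix (Fin p) (Fin n) ℝ) : entPos M - entNeg M = M :=
  sub_sub_cancel _ _

theorem entAbs_apply (M : Matrix (Fin p) (Fin n) ℝ) (i : Fin p) (j : Fin n) :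
    entAbs M i j = |M i j| := by
  simp only [entAbs, entNeg, entPos, Matrix.add_apply, Matrix.sub_apply, of_apply]
  rcases le_total (M i j) 0 with h | h
  · rw [max_eq_right h, abs_of_nonpos h]; ring
  · rw [max_eq_left h, abs_of_nonneg h]; ring

theorem entAbs_nonneg (M : Matrix (Fin p) (Fin n) ℝ) (i : Fin p) (j : Fin n) :
    0 ≤ entAbs M i j :=
  entAbs_apply M i j ▸ abs_nonneg _

theorem entAbs_of_nonneg {M : Matrix (Fin p) (Fin n) ℝ} (hM : ∀ i j, 0 ≤ M i j) :
    entAbs M = M := by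
  ext i j
  rw [entAbs_apply, abs_of_nonneg (hM i j)]

theorem entAbs_sub_mul_le {q : ℕ} (A : Matrix (Fin p) (Fin n) ℝ) (L : Matrix (Fin p) (Fin q) ℝ)
    (C : Matrix (Fin q) (Fin n) ℝ) (i : Fin p) (j : Fin n) :
    entAbs (A - L * C) i j ≤ (entAbs A + entAbs L * entAbs C) i j := by
  simp only [Matrix.add_apply, Matrix.sub_apply, mul_apply, entAbs_apply]
  calc |A i j - ∑ k, L i k * C k j| ≤ |A i j| + |∑ k, L i k * C k j| := abs_sub _ _
    _ ≤ |A i j| + ∑ k, |L i k| * |C k j| := by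
      gcongr
      simpa only [abs_mul] using Finset.abs_sum_le_sum_abs (fun k => L i k * C k j) Finset.univ

end EntrywiseParts

section NonnegMatrix

variable {m ι : Type*} [Fintype ι] {M N : Matrix m ι ℝ}

theorem mulVec_mono_of_nonneg (hM : ∀ i j, 0 ≤ M i j) {u v : ι → ℝ} (huv : u ≤ v) :
    M *ᵥ u ≤ M *ᵥ v := by
  intro i
  simp only [mulVec, dotProduct]
  exact Finset.sum_le_sum fun j _ => mul_le_mul_of_nonneg_left (huv j) (hM i j)

theorem mulVec_le_mulVec_of_le (hMN : ∀ i j, M i j ≤ N i j) {v : ι → ℝ} (hv : 0 ≤ v) :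
    M *ᵥ v ≤ N *ᵥ v := by
  intro i
  simp only [mulVec, dotProduct]
  exact Finset.sum_le_sum fun j _ => mul_le_mul_of_nonneg_right (hMN i j) (hv j)

theorem tendsto_zero_of_le_mulVec [DecidableEq ι] {M : Matrix ι ι ℝ} (hM : ∀ i j, 0 ≤ M i j)
    {e : ℕ → ι → ℝ} (hconv : Tendsto (fun t => (M ^ t) *ᵥ e 0) atTop (𝓝 0))
    (he : ∀ t, 0 ≤ e t) (hstep : ∀ t, e (t + 1) ≤ M *ᵥ e t) :
    Tendsto e atTop (𝓝 0) := by
  have hpow : ∀ t, e t ≤ (M ^ t) *ᵥ e 0 := by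
    intro t
    induction t with
    | zero => simp
    | succ t ih =>
      rw [pow_succ', ← mulVec_mulVec]
      exact (hstep t).trans (mulVec_mono_of_nonneg hM ih)
  rw [tendsto_pi_nhds] at hconv ⊢
  exact fun i => squeeze_zero (fun t => he t i) (fun t => hpow t i) (hconv i)

end NonnegMatrix

theorem IsDecompositionFunction.mem_Icc {n p : ℕ} {g : (Fin n → ℝ) → Fin p → ℝ}
    {gd : (Fin n → ℝ) → (Fin n → ℝ) → Fin p → ℝ} (hg : IsDecompositionFunction g gd)
    {xl x xu : Fin n → ℝ} (hl : xl ≤ x) (hu : x ≤ xu) : g x ∈ Set.Icc (gd xl xu) (gd xu xl) := by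
  rw [← hg.1 x]
  exact ⟨(hg.2.1 _ _ _ hl).trans (hg.2.2 _ _ _ hu), (hg.2.2 _ _ _ hl).trans (hg.2.1 _ _ _ hu)⟩

section Observer

variable {n l : ℕ} {A : Matrix (Fin n) (Fin n) ℝ} {C : Matrix (Fin l) (Fin n) ℝ}
  {L : Matrix (Fin n) (Fin l) ℝ} {φ : (Fin n → ℝ) → Fin n → ℝ} {ψ : (Fin n → ℝ) → Fin l → ℝ}
  {φd : (Fin n → ℝ) → (Fin n → ℝ) → Fin n → ℝ} {ψd : (Fin n → ℝ) → (Fin n → ℝ) → Fin l → ℝ}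

/-- One step of the observer: the upper framer is updated by `observerStep y xu xl`, the lower
one by `observerStep y xl xu`. -/
noncomputable def observerStep (A : Matrix (Fin n) (Fin n) ℝ) (C : Matrix (Fin l) (Fin n) ℝ)
    (L : Matrix (Fin n) (Fin l) ℝ) (φd : (Fin n → ℝ) → (Fin n → ℝ) → Fin n → ℝ)
    (ψd : (Fin n → ℝ) → (Fin n → ℝ) → Fin l → ℝ) (y : Fin l → ℝ) (a b : Fin n → ℝ) :
    Fin n → ℝ :=
  entPos (A - L * C) *ᵥ a - entNeg (A - L * C) *ᵥ b + L *ᵥ y + φd a b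
    - entPos L *ᵥ ψd b a + entNeg L *ᵥ ψd a b

theorem isDecompositionFunction_observerStep (hφ : IsDecompositionFunction φ φd)
    (hψ : IsDecompositionFunction ψ ψd) (y : Fin l → ℝ) :
    IsDecompositionFunction (fun x => (A - L * C) *ᵥ x + L *ᵥ y + φ x - L *ᵥ ψ x)
      (observerStep A C L φd ψd y) := by
  refine ⟨fun x => ?_, fun x x' b hx => ?_, fun x x' a hx => ?_⟩
  · have hsplit : ∀ {k : ℕ} (M : Matrix (Fin n) (Fin k) ℝ) (v : Fin k → ℝ),
        M *ᵥ v = entPos M *ᵥ v - entNeg M *ᵥ v := fun M v => by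
      rw [← sub_mulVec, entPos_sub_entNeg]
    dsimp only
    rw [observerStep, hφ.1, hψ.1, hsplit (A - L * C), hsplit L (ψ x)]
    abel
  · simp only [observerStep]
    gcongr ?_ - _ + _ + ?_ - ?_ + ?_
    · exact mulVec_mono_of_nonneg (entPos_nonneg _) hx
    · exact hφ.2.1 _ _ _ hx
    · exact mulVec_mono_of_nonneg (entPos_nonneg _) (hψ.2.2 _ _ _ hx)
    · exact mulVec_mono_of_nonneg (entNeg_nonneg _) (hψ.2.1 _ _ _ hx)
  · simp only [observerStep]
    gcongr _ - ?_ + _ + ?_ - ?_ + ?_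
    · exact mulVec_mono_of_nonneg (entNeg_nonneg _) hx
    · exact hφ.2.2 _ _ _ hx
    · exact mulVec_mono_of_nonneg (entPos_nonneg _) (hψ.2.1 _ _ _ hx)
    · exact mulVec_mono_of_nonneg (entNeg_nonneg _) (hψ.2.2 _ _ _ hx)

theorem framer_of_observerStep (hφ : IsDecompositionFunction φ φd)
    (hψ : IsDecompositionFunction ψ ψd) {x xu xl : ℕ → Fin n → ℝ} {y : ℕ → Fin l → ℝ}
    (hx : ∀ t, x (t + 1) = A *ᵥ x t + φ (x t)) (hy : ∀ t, y t = C *ᵥ x t + ψ (x t))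
    (hxu : ∀ t, xu (t + 1) = observerStep A C L φd ψd (y t) (xu t) (xl t))
    (hxl : ∀ t, xl (t + 1) = observerStep A C L φd ψd (y t) (xl t) (xu t))
    (hxl0 : xl 0 ≤ x 0) (hxu0 : x 0 ≤ xu 0) (t : ℕ) : xl t ≤ x t ∧ x t ≤ xu t := by
  induction t with
  | zero => exact ⟨hxl0, hxu0⟩
  | succ t ih =>
    have hplant : x (t + 1) = (A - L * C) *ᵥ x t + L *ᵥ y t + φ (x t) - L *ᵥ ψ (x t) := by
      rw [hx t, hy t, sub_mulVec, mulVec_add, mulVec_mulVec]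
      abel
    rw [hplant, hxu t, hxl t]
    exact (isDecompositionFunction_observerStep hφ hψ (y t)).mem_Icc ih.1 ih.2

theorem observerStep_sub_observerStep_le {Fφ : Matrix (Fin n) (Fin n) ℝ}
    {Fψ : Matrix (Fin l) (Fin n) ℝ}
    (hFφ : ∀ xlo xhi : Fin n → ℝ, xlo ≤ xhi → φd xhi xlo - φd xlo xhi ≤ Fφ *ᵥ (xhi - xlo))
    (hFψ : ∀ xlo xhi : Fin n → ℝ, xlo ≤ xhi → ψd xhi xlo - ψd xlo xhi ≤ Fψ *ᵥ (xhi - xlo))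
    (y : Fin l → ℝ) {a b : Fin n → ℝ} (hba : b ≤ a) :
    observerStep A C L φd ψd y a b - observerStep A C L φd ψd y b a ≤
      (entAbs A + Fφ + entAbs L * (entAbs C + Fψ)) *ᵥ (a - b) := by
  have hdiff : observerStep A C L φd ψd y a b - observerStep A C L φd ψd y b a =
      entAbs (A - L * C) *ᵥ (a - b) + (φd a b - φd b a) + entAbs L *ᵥ (ψd a b - ψd b a) := by
    simp only [observerStep, entAbs, add_mulVec, mulVec_sub]
    abel
  have hlin : entAbs (A - L * C) *ᵥ (a - b) ≤ (entAbs A + entAbs L * entAbs C) *ᵥ (a - b) :=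
    mulVec_le_mulVec_of_le (entAbs_sub_mul_le A L C) (sub_nonneg.2 hba)
  have hout : entAbs L *ᵥ (ψd a b - ψd b a) ≤ (entAbs L * Fψ) *ᵥ (a - b) := by
    rw [← mulVec_mulVec]
    exact mulVec_mono_of_nonneg (entAbs_nonneg L) (hFψ b a hba)
  calc _ = _ := hdiff
    _ ≤ (entAbs A + entAbs L * entAbs C) *ᵥ (a - b) + Fφ *ᵥ (a - b)
          + (entAbs L * Fψ) *ᵥ (a - b) := add_le_add (add_le_add hlin (hFφ b a hba)) hout
    _ = _ := by
      simp only [Matrix.mul_add, add_mulVec]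
      abel

end Observer

theorem neg_inv_transpose_mul_transpose_nonneg {n l : ℕ} {X : Matrix (Fin n) (Fin n) ℝ}
    (hX : Metzler (-X)) (hpos : ∀ v, v ≠ 0 → 0 < v ⬝ᵥ X *ᵥ v) {J : Matrix (Fin l) (Fin n) ℝ}
    (hJ : ∀ i j, J i j ≤ 0) (i : Fin n) (j : Fin l) : 0 ≤ (-((Xᵀ)⁻¹ * Jᵀ)) i j := by
  rw [← transpose_nonsing_inv, Matrix.neg_apply, mul_apply, neg_nonneg]
  exact Finset.sum_nonpos fun k _ =>
    mul_nonpos_of_nonneg_of_nonpos (inv_nonneg_of_metzler_neg hX hpos k i) (hJ j k)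

theorem transpose_neg_inv_transpose_mul_transpose_mul {n l : ℕ} {X : Matrix (Fin n) (Fin n) ℝ}
    (hX : IsUnit X.det) (J : Matrix (Fin l) (Fin n) ℝ) : (-((Xᵀ)⁻¹ * Jᵀ))ᵀ * X = -J := by
  rw [transpose_neg, transpose_mul, transpose_transpose, ← transpose_nonsing_inv,
    transpose_transpose, Matrix.neg_mul, nonsing_inv_mul_cancel_right _ _ hX]

theorem statement15_general {n l : ℕ} (A : Matrix (Fin n) (Fin n) ℝ) (C : Matrix (Fin l) (Fin n) ℝ)
    (φ : (Fin n → ℝ) → Fin n → ℝ) (ψ : (Fin n → ℝ) → Fin l → ℝ)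
    (φd : (Fin n → ℝ) → (Fin n → ℝ) → Fin n → ℝ)
    (ψd : (Fin n → ℝ) → (Fin n → ℝ) → Fin l → ℝ)
    (hφ : IsDecompositionFunction φ φd) (hψ : IsDecompositionFunction ψ ψd)
    (Fφ : Matrix (Fin n) (Fin n) ℝ) (Fψ : Matrix (Fin l) (Fin n) ℝ)
    (hFφ0 : ∀ i j, 0 ≤ Fφ i j) (hFψ0 : ∀ i j, 0 ≤ Fψ i j)
    (hFφ : ∀ xlo xhi : Fin n → ℝ, xlo ≤ xhi →
      φd xhi xlo - φd xlo xhi ≤ Fφ.mulVec (xhi - xlo))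
    (hFψ : ∀ xlo xhi : Fin n → ℝ, xlo ≤ xhi →
      ψd xhi xlo - ψd xlo xhi ≤ Fψ.mulVec (xhi - xlo))
    (P X : Matrix (Fin n) (Fin n) ℝ) (J : Matrix (Fin l) (Fin n) ℝ)
    (hP : P.PosDef)
    (hJ : ∀ i j, J i j ≤ 0)
    (Γ : Matrix (Fin n) (Fin n) ℝ)
    (hΓ : Γ = ((entAbs A)ᵀ + Fφᵀ) * X - ((entAbs C)ᵀ + Fψᵀ) * J)
    -- the block matrix [[−P, Γ],[Γᵀ, P − X − Xᵀ]] is negative definite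
    (hLMI : (-(Matrix.fromBlocks (-P) Γ Γᵀ (P - X - Xᵀ))).PosDef)
    (hXMetzler : Metzler (-X)) :
    -- X is invertible
    IsUnit X.det ∧
    -- and the framer error converges to zero for the gain L = −(Xᵀ)⁻¹Jᵀ
    (∀ L : Matrix (Fin n) (Fin l) ℝ, L = -((Xᵀ)⁻¹ * Jᵀ) →
      ∀ (x xu xl : ℕ → Fin n → ℝ) (y : ℕ → Fin l → ℝ),
        (∀ t, x (t + 1) = A.mulVec (x t) + φ (x t)) →
        (∀ t, y t = C.mulVec (x t) + ψ (x t)) →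
        (∀ t, xu (t + 1) =
          (entPos (A - L * C)).mulVec (xu t) - (entNeg (A - L * C)).mulVec (xl t)
            + L.mulVec (y t) + φd (xu t) (xl t)
            - (entPos L).mulVec (ψd (xl t) (xu t)) + (entNeg L).mulVec (ψd (xu t) (xl t))) →
        (∀ t, xl (t + 1) =
          (entPos (A - L * C)).mulVec (xl t) - (entNeg (A - L * C)).mulVec (xu t)
            + L.mulVec (y t) + φd (xl t) (xu t)
            - (entPos L).mulVec (ψd (xu t) (xl t)) + (entNeg L).mulVec (ψd (xl t) (xu t))) →
        xl 0 ≤ x 0 → x 0 ≤ xu 0 →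
        Filter.Tendsto (fun t => xu t - xl t) Filter.atTop (nhds 0)) := by
  have hXpos : ∀ w, w ≠ 0 → 0 < w ⬝ᵥ X *ᵥ w := fun w hw =>
    dotProduct_mulVec_pos_of_negDef_fromBlocks hP.posSemidef hLMI hw
  have hdet : IsUnit X.det := isUnit_det_of_dotProduct_mulVec_pos hXpos
  refine ⟨hdet, fun L hL x xu xl y hx hy hxu hxl hxl0 hxu0 => ?_⟩
  have hL0 : ∀ i j, 0 ≤ L i j := hL ▸ neg_inv_transpose_mul_transpose_nonneg hXMetzler hXpos hJ
  set M := entAbs A + Fφ + L * (entAbs C + Fψ) with hM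
  have hM0 : ∀ i j, 0 ≤ M i j := fun i j => by
    rw [hM, Matrix.add_apply, Matrix.add_apply, mul_apply]
    exact add_nonneg (add_nonneg (entAbs_nonneg A i j) (hFφ0 i j)) (Finset.sum_nonneg fun k _ =>
      mul_nonneg (hL0 i k) (add_nonneg (entAbs_nonneg C k j) (hFψ0 k j)))
  have hΓM : Γ = Mᵀ * X := by
    have hLX : Lᵀ * X = -J := hL ▸ transpose_neg_inv_transpose_mul_transpose_mul hdet J
    simp only [hΓ, hM, transpose_add, transpose_mul, Matrix.add_mul, Matrix.mul_assoc, hLX,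
      Matrix.mul_neg, sub_eq_add_neg, neg_add]
  have hframe := framer_of_observerStep hφ hψ hx hy hxu hxl hxl0 hxu0
  refine tendsto_zero_of_le_mulVec hM0
    (tendsto_pow_mulVec_zero_of_lyapunov hP.posSemidef
      (fun v hv => lyapunov_decrease_of_negDef_fromBlocks hΓM hLMI hv) _)
    (fun t => sub_nonneg.2 ((hframe t).1.trans (hframe t).2)) (fun t => ?_)
  have hstep := observerStep_sub_observerStep_le (A := A) (C := C) (L := L) hFφ hFψ (y t)
    ((hframe t).1.trans (hframe t).2)
  rw [hxu t, hxl t]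
  rwa [entAbs_of_nonneg hL0, ← hM] at hstep

/-- stability of the interval observer, discrete time. -/
theorem statement15 {n l : ℕ} (A : Matrix (Fin n) (Fin n) ℝ) (C : Matrix (Fin l) (Fin n) ℝ)
    (φ : (Fin n → ℝ) → Fin n → ℝ) (ψ : (Fin n → ℝ) → Fin l → ℝ)
    (φd : (Fin n → ℝ) → (Fin n → ℝ) → Fin n → ℝ)
    (ψd : (Fin n → ℝ) → (Fin n → ℝ) → Fin l → ℝ)
    (hφ : IsDecompositionFunction φ φd) (hψ : IsDecompositionFunction ψ ψd)
    (Fφ : Matrix (Fin n) (Fin n) ℝ) (Fψ : Matrix (Fin l) (Fin n) ℝ)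
    (hFφ0 : ∀ i j, 0 ≤ Fφ i j) (hFψ0 : ∀ i j, 0 ≤ Fψ i j)
    (hFφ : ∀ xlo xhi : Fin n → ℝ, xlo ≤ xhi →
      φd xhi xlo - φd xlo xhi ≤ Fφ.mulVec (xhi - xlo))
    (hFψ : ∀ xlo xhi : Fin n → ℝ, xlo ≤ xhi →
      ψd xhi xlo - ψd xlo xhi ≤ Fψ.mulVec (xhi - xlo))
    (P X : Matrix (Fin n) (Fin n) ℝ) (J : Matrix (Fin l) (Fin n) ℝ)
    (hPsymm : P.IsSymm) (hP : P.PosDef)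
    (hJ : ∀ i j, J i j ≤ 0)
    (Γ : Matrix (Fin n) (Fin n) ℝ)
    (hΓ : Γ = ((entAbs A)ᵀ + Fφᵀ) * X - ((entAbs C)ᵀ + Fψᵀ) * J)
    -- the block matrix [[−P, Γ],[Γᵀ, P − X − Xᵀ]] is negative definite
    (hLMI : (-(Matrix.fromBlocks (-P) Γ Γᵀ (P - X - Xᵀ))).PosDef)
    (hJC : ∀ i j, (Jᵀ * C) i j ≤ 0)
    (hXMetzler : Metzler (-X)) :
    -- X is invertible
    IsUnit X.det ∧
    -- and the framer error converges to zero for the gain L = −(Xᵀ)⁻¹Jᵀ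
    (∀ L : Matrix (Fin n) (Fin l) ℝ, L = -((Xᵀ)⁻¹ * Jᵀ) →
      ∀ (x xu xl : ℕ → Fin n → ℝ) (y : ℕ → Fin l → ℝ),
        (∀ t, x (t + 1) = A.mulVec (x t) + φ (x t)) →
        (∀ t, y t = C.mulVec (x t) + ψ (x t)) →
        (∀ t, xu (t + 1) =
          (entPos (A - L * C)).mulVec (xu t) - (entNeg (A - L * C)).mulVec (xl t)
            + L.mulVec (y t) + φd (xu t) (xl t)
            - (entPos L).mulVec (ψd (xl t) (xu t)) + (entNeg L).mulVec (ψd (xu t) (xl t))) →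
        (∀ t, xl (t + 1) =
          (entPos (A - L * C)).mulVec (xl t) - (entNeg (A - L * C)).mulVec (xu t)
            + L.mulVec (y t) + φd (xl t) (xu t)
            - (entPos L).mulVec (ψd (xu t) (xl t)) + (entNeg L).mulVec (ψd (xl t) (xu t))) →
        xl 0 ≤ x 0 → x 0 ≤ xu 0 →
        Filter.Tendsto (fun t => xu t - xl t) Filter.atTop (nhds 0)) :=
  statement15_general A C φ ψ φd ψd hφ hψ Fφ Fψ hFφ0 hFψ0 hFφ hFψ P X J hP hJ Γ hΓ hLMI hXMetzler
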